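/- Let T > 0, β ∈ (0,1], α ∈ (0,β), χ ∈ ℝ and M ≥ 0. Let φ : [0,T) → ℝ be measurable, integrable on compact subintervals of [0,T), with φ(u) ≥ β/(T − u) for a.e. u, and let h : [0,T) → ℝ be measurable with |h_s| ≤ M for a.e. s. Define Q_t = χ exp(−∫_0^t φ(u) du) + ∫_0^t exp(−∫_s^t φ(u) du) h_s ds for t ∈ [0,T). Then there is a constant C depending only on T, α and β such that |Q_t| ≤ C (T − t)^α (|χ| + M) for all t ∈ [0,T); in particular Q_t → 0 as t ↑ T. -/
import Mathlib


open MeasureTheory Filter Topology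

lemma key_exp_bound (T β α : ℝ) (hβ0 : 0 < β) (hαβ : α < β) (hα0 : 0 < α)
    (φ : ℝ → ℝ)
    (hφae : ∀ᵐ u ∂(volume.restrict (Set.Ico (0 : ℝ) T)), β / (T - u) ≤ φ u)
    (s t : ℝ) (hs : 0 ≤ s) (hst : s ≤ t) (htT : t < T)
    (hφint : IntervalIntegrable φ volume s t) :
    Real.exp (-(∫ u in s..t, φ u)) ≤ (T - t) ^ α / (T - s) ^ α := by
  have hTt : 0 < T - t := by linarith
  have hTs : 0 < T - s := by linarith
  -- integrability of the comparison function
  have hcont : ContinuousOn (fun u => α * (T - u)⁻¹) (Set.uIcc s t) := by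
    apply ContinuousOn.mul continuousOn_const
    apply ContinuousOn.inv₀ (by fun_prop)
    intro x hx
    rw [Set.uIcc_of_le hst] at hx
    have hx2 : x < T := lt_of_le_of_lt hx.2 htT
    exact ne_of_gt (by linarith)
  have hψint : IntervalIntegrable (fun u => α * (T - u)⁻¹) volume s t :=
    hcont.intervalIntegrable
  -- a.e. comparison on Icc s t
  have hsub : Set.Icc s t ⊆ Set.Ico 0 T := fun x hx =>
    ⟨le_trans hs hx.1, lt_of_le_of_lt hx.2 htT⟩
  have hle : (fun u => α * (T - u)⁻¹) ≤ᵐ[volume.restrict (Set.Icc s t)] φ := by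
    have h1 := ae_restrict_of_ae_restrict_of_subset hsub hφae
    have h2 := ae_restrict_mem (measurableSet_Icc (a := s) (b := t)) (μ := volume)
    filter_upwards [h1, h2] with u hu hmem
    have hu1 : 0 < T - u := by
      have := hmem.2; linarith
    have : α * (T - u)⁻¹ ≤ β / (T - u) := by
      rw [div_eq_mul_inv]
      apply mul_le_mul_of_nonneg_right hαβ.le (by positivity)
    linarith
  have hmono := intervalIntegral.integral_mono_ae_restrict hst hψint hφint hle
  -- compute the comparison integral
  have hcomp : (∫ u in s..t, α * (T - u)⁻¹) = α * Real.log ((T - s) / (T - t)) := by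
    rw [intervalIntegral.integral_const_mul]
    congr 1
    have h1 := intervalIntegral.integral_comp_sub_left (a := s) (b := t)
      (fun v : ℝ => v⁻¹) T
    rw [h1, integral_inv]
    rintro hmem
    rw [Set.uIcc_of_le (by linarith)] at hmem
    linarith [hmem.1]
  rw [hcomp] at hmono
  calc Real.exp (-(∫ u in s..t, φ u))
      ≤ Real.exp (-(α * Real.log ((T - s) / (T - t)))) := by
        exact Real.exp_le_exp.mpr (by linarith)
    _ = ((T - s) / (T - t)) ^ (-α) := by
        rw [Real.rpow_def_of_pos (by positivity)]
        ring_nf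
    _ = (T - t) ^ α / (T - s) ^ α := by
        rw [Real.div_rpow hTs.le hTt.le, Real.rpow_neg hTs.le, Real.rpow_neg hTt.le]
        field_simp

/-- **Deterministic weighted estimate for the forward component.**
For `β ∈ (0,1]`, `α ∈ (0,β)`, there is `C = C(T,α,β) > 0` such that whenever
`φ(u) ≥ β/(T−u)` a.e., `|h| ≤ M` a.e., and
`Q_t = χ e^{−∫₀^t φ} + ∫₀^t e^{−∫_s^t φ} h_s ds`, one has
`|Q_t| ≤ C (T−t)^α (|χ| + M)` on `[0,T)`; in particular `Q_t → 0` as `t ↑ T`. -/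
theorem forward_component_weighted_estimate
    (T β α : ℝ) (hT : 0 < T) (hβ0 : 0 < β) (hβ1 : β ≤ 1) (hα0 : 0 < α) (hαβ : α < β) :
    ∃ C : ℝ, 0 < C ∧
      ∀ (χ M : ℝ), 0 ≤ M →
      ∀ φ h : ℝ → ℝ, Measurable φ →
        (∀ b : ℝ, 0 ≤ b → b < T → IntegrableOn φ (Set.Icc 0 b) volume) →
        (∀ᵐ u ∂(volume.restrict (Set.Ico (0 : ℝ) T)), β / (T - u) ≤ φ u) →
        Measurable h →
        (∀ᵐ s ∂(volume.restrict (Set.Ico (0 : ℝ) T)), |h s| ≤ M) →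
        ((∀ t ∈ Set.Ico (0 : ℝ) T,
            |χ * Real.exp (-(∫ u in (0 : ℝ)..t, φ u))
              + ∫ s in (0 : ℝ)..t, Real.exp (-(∫ u in s..t, φ u)) * h s|
              ≤ C * (T - t) ^ α * (|χ| + M)) ∧
          Tendsto (fun t => χ * Real.exp (-(∫ u in (0 : ℝ)..t, φ u))
              + ∫ s in (0 : ℝ)..t, Real.exp (-(∫ u in s..t, φ u)) * h s)
            (nhdsWithin T (Set.Iio T)) (nhds 0)) := by
  have h1a : 0 < 1 - α := by linarith
  have hCa : 0 < T ^ (-α) := Real.rpow_pos_of_pos hT _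
  have hCb : 0 < T ^ (1 - α) / (1 - α) := by
    have := Real.rpow_pos_of_pos hT (1 - α); positivity
  refine ⟨T ^ (-α) + T ^ (1 - α) / (1 - α), by positivity, ?_⟩
  intro χ M hM φ h hφm hint hφae hhm hhae
  set C : ℝ := T ^ (-α) + T ^ (1 - α) / (1 - α) with hC
  have main : ∀ t ∈ Set.Ico (0 : ℝ) T,
      |χ * Real.exp (-(∫ u in (0 : ℝ)..t, φ u))
        + ∫ s in (0 : ℝ)..t, Real.exp (-(∫ u in s..t, φ u)) * h s|
        ≤ C * (T - t) ^ α * (|χ| + M) := by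
    intro t ht
    obtain ⟨ht0, htT⟩ := ht
    have hTt : 0 < T - t := by linarith
    have hφt : IntervalIntegrable φ volume 0 t := by
      rw [intervalIntegrable_iff_integrableOn_Ioc_of_le ht0]
      exact (hint t ht0 htT).mono_set Set.Ioc_subset_Icc_self
    -- bound on first term
    have hA : |χ * Real.exp (-(∫ u in (0 : ℝ)..t, φ u))|
        ≤ |χ| * ((T - t) ^ α / T ^ α) := by
      rw [abs_mul, abs_of_pos (Real.exp_pos _)]
      have := key_exp_bound T β α hβ0 hαβ hα0 φ hφae 0 t le_rfl ht0 htT hφt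
      rw [sub_zero] at this
      exact mul_le_mul_of_nonneg_left this (abs_nonneg _)
    -- bound on second term
    have hgint : IntegrableOn (fun s => (M * (T - t) ^ α) * (T - s) ^ (-α))
        (Set.Ioc 0 t) volume := by
      apply IntegrableOn.mono_set _ Set.Ioc_subset_Icc_self
      apply ContinuousOn.integrableOn_Icc
      apply ContinuousOn.mul continuousOn_const
      apply ContinuousOn.rpow_const (by fun_prop)
      intro x hx
      exact Or.inl (ne_of_gt (by linarith [hx.2] : (0:ℝ) < T - x))
    have hBbound : ‖∫ s in Set.Ioc (0 : ℝ) t, Real.exp (-(∫ u in s..t, φ u)) * h s‖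
        ≤ ∫ s in Set.Ioc (0 : ℝ) t, (M * (T - t) ^ α) * (T - s) ^ (-α) := by
      apply MeasureTheory.norm_integral_le_of_norm_le hgint
      have hsub : Set.Ioc (0:ℝ) t ⊆ Set.Ico 0 T := fun x hx =>
        ⟨hx.1.le, lt_of_le_of_lt hx.2 htT⟩
      have h1 := ae_restrict_of_ae_restrict_of_subset hsub hhae
      have h2 := ae_restrict_mem (measurableSet_Ioc (a := (0:ℝ)) (b := t)) (μ := volume)
      filter_upwards [h1, h2] with s hs hmem
      have hs0 : 0 ≤ s := hmem.1.le
      have hst : s ≤ t := hmem.2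
      have hTs : 0 < T - s := by linarith
      have hφst : IntervalIntegrable φ volume s t := by
        apply hφt.mono_set
        rw [Set.uIcc_of_le hst, Set.uIcc_of_le ht0]
        exact Set.Icc_subset_Icc_left hs0
      have hkey := key_exp_bound T β α hβ0 hαβ hα0 φ hφae s t hs0 hst htT hφst
      rw [Real.norm_eq_abs, abs_mul, abs_of_pos (Real.exp_pos _)]
      have hrw : (T - t) ^ α / (T - s) ^ α = (T - t) ^ α * (T - s) ^ (-α) := by
        rw [Real.rpow_neg hTs.le]; ring
      calc Real.exp (-(∫ u in s..t, φ u)) * |h s|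
          ≤ ((T - t) ^ α / (T - s) ^ α) * M := by
            apply mul_le_mul hkey hs (abs_nonneg _)
            positivity
        _ = (M * (T - t) ^ α) * (T - s) ^ (-α) := by rw [hrw]; ring
    have hJ : (∫ s in Set.Ioc (0 : ℝ) t, (M * (T - t) ^ α) * (T - s) ^ (-α))
        ≤ (M * (T - t) ^ α) * (T ^ (1 - α) / (1 - α)) := by
      rw [MeasureTheory.integral_const_mul]
      apply mul_le_mul_of_nonneg_left _ (by positivity)
      rw [← intervalIntegral.integral_of_le ht0]
      have h1 := intervalIntegral.integral_comp_sub_left (a := (0:ℝ)) (b := t)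
        (fun v : ℝ => v ^ (-α)) T
      rw [h1, integral_rpow (Or.inl (by linarith : (-1:ℝ) < -α)), sub_zero]
      have heq : -α + 1 = 1 - α := by ring
      rw [heq]
      rw [div_le_div_iff_of_pos_right h1a]
      have := Real.rpow_nonneg hTt.le (1 - α)
      linarith
    -- combine
    have habs : |χ * Real.exp (-(∫ u in (0 : ℝ)..t, φ u))
        + ∫ s in (0 : ℝ)..t, Real.exp (-(∫ u in s..t, φ u)) * h s|
        ≤ |χ| * ((T - t) ^ α / T ^ α)
          + (M * (T - t) ^ α) * (T ^ (1 - α) / (1 - α)) := by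
      refine (abs_add_le _ _).trans (add_le_add hA ?_)
      rw [intervalIntegral.integral_of_le ht0, ← Real.norm_eq_abs]
      exact hBbound.trans hJ
    refine habs.trans ?_
    have hdiv : (T - t) ^ α / T ^ α = (T - t) ^ α * T ^ (-α) := by
      rw [Real.rpow_neg hT.le]; ring
    rw [hdiv, hC]
    have hP : 0 ≤ (T - t) ^ α := Real.rpow_nonneg hTt.le α
    have habs0 : 0 ≤ |χ| := abs_nonneg χ
    nlinarith [mul_nonneg (mul_nonneg hP habs0) hCb.le,
      mul_nonneg (mul_nonneg hP hM) hCa.le]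
  refine ⟨main, ?_⟩
  have hg : Tendsto (fun t => C * (T - t) ^ α * (|χ| + M))
      (nhdsWithin T (Set.Iio T)) (nhds 0) := by
    have h1 : Tendsto (fun t : ℝ => T - t) (nhds T) (nhds 0) := by
      have : Tendsto (fun t : ℝ => T - t) (nhds T) (nhds (T - T)) :=
        ((continuous_const.sub continuous_id).tendsto T)
      simpa using this
    have h2 : Tendsto (fun x : ℝ => x ^ α) (nhds 0) (nhds 0) := by
      have := (Real.continuousAt_rpow_const 0 α (Or.inr hα0.le)).tendsto
      simpa [Real.zero_rpow hα0.ne'] using this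
    have h3 : Tendsto (fun t : ℝ => (T - t) ^ α) (nhds T) (nhds 0) := h2.comp h1
    have h4 := (h3.const_mul C).mul_const (|χ| + M)
    simpa using h4.mono_left nhdsWithin_le_nhds
  apply squeeze_zero_norm' _ hg
  have hIoo : Set.Ioo (0 : ℝ) T ∈ nhdsWithin T (Set.Iio T) :=
    Ioo_mem_nhdsLT_of_mem ⟨hT, le_rfl⟩
  filter_upwards [hIoo] with t htm
  rw [Real.norm_eq_abs]
  exact main t ⟨htm.1.le, htm.2⟩
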